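/- Let K be a field of characteristic p > 0 with K/k finitely generated, k = ⋂_n K^{p^n}, and K ≠ k. Then the K-algebra Diff_k(K) of differential operators on K over k is not finitely generated as a K-algebra. -/

import Mathlib

/-!
A differential operator of order `n` on `K` commutes with multiplication by `p^m`-th powers as
soon as `p^m > n`, because in characteristic `p` the operators `ad(a) = [a, ·]` satisfy
`ad(a)^(p^m) = ad(a^(p^m))`. Hence finitely many differential operators, together with the
multiplications by elements of `K`, only generate operators that are `K^(p^N)`-linear for one
fixed `N`. On the other hand `K` is finite over `K^(p^(N+1))`, and there every
`K^(p^(N+1))`-linear endomorphism is a differential operator: the pairwise commuting `ad(a)`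
span an ideal generated by finitely many nilpotents, which is therefore nilpotent. As `K ≠ k`,
some `c ∈ K^(p^N)` is not in `K^(p^(N+1))`, and a `K^(p^(N+1))`-linear map killing `1` but
not `c` is not `K^(p^N)`-linear.
-/

/-- The subfield `K^{p^n}` of `p^n`-th powers of `K`. -/
noncomputable def pfield (K : Type*) [Field K] (p : ℕ) [hp : Fact p.Prime] [CharP K p]
    (n : ℕ) : Subfield K :=
  haveI : ExpChar K p := .prime hp.out
  (iterateFrobenius K p n).fieldRange

/-- The subfield `k = ⋂_{n ≥ 0} K^{p^n}`. -/
noncomputable def kfield (K : Type*) [Field K] (p : ℕ) [Fact p.Prime] [CharP K p] : Subfield K :=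
  ⨅ n : ℕ, pfield K p n

/-- A power tower on `K`: a sequence of subfields with `W j = W i · K^{p^j}` for `j ≤ i`. -/
def IsPowerTower (K : Type*) [Field K] (p : ℕ) [Fact p.Prime] [CharP K p]
    (W : ℕ → Subfield K) : Prop :=
  ∀ ⦃i j : ℕ⦄, j ≤ i → W j = W i ⊔ pfield K p j

/-- The degree `[A : B]` for subfields `B ≤ A` of `K` (computed as `[B ⊔ A : B]`). -/
noncomputable def relrank {K : Type*} [Field K] (B A : Subfield K) : ℕ :=
  letI := (Subfield.inclusion (le_sup_left : B ≤ B ⊔ A)).toAlgebra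
  Module.finrank ↥B ↥(B ⊔ A)

/-- Finiteness of the degree `[A : B]` (as `[B ⊔ A : B]`). -/
def finRel {K : Type*} [Field K] (B A : Subfield K) : Prop :=
  letI := (Subfield.inclusion (le_sup_left : B ≤ B ⊔ A)).toAlgebra
  FiniteDimensional ↥B ↥(B ⊔ A)

/-- The commutator `[a, D] = a∘D − D∘a` of multiplication by `a` with an operator `D`. -/
def Brk {R A : Type*} [CommSemiring R] [CommRing A] [Algebra R A]
    (a : A) (D : A →ₗ[R] A) : A →ₗ[R] A :=
  (LinearMap.mulLeft R a).comp D - D.comp (LinearMap.mulLeft R a)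

/-- `OrdLE n D`: `D` is a differential operator of order at most `n`, i.e. all iterated
commutators `[a₀,[a₁,…,[aₙ,D]…]]` with `n+1` multiplications vanish. -/
def OrdLE {R A : Type*} [CommSemiring R] [CommRing A] [Algebra R A] :
    ℕ → (A →ₗ[R] A) → Prop
  | 0, D => ∀ a : A, Brk a D = 0
  | n + 1, D => ∀ a : A, OrdLE n (Brk a D)

/-- `D` is a differential operator (of some finite order) on `A` relative to `R`. -/
def IsDiffOp (R A : Type*) [CommSemiring R] [CommRing A] [Algebra R A]
    (D : A →ₗ[R] A) : Prop :=
  ∃ n : ℕ, OrdLE n D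

section Brk

variable {R A : Type*} [CommSemiring R] [CommRing A] [Algebra R A]

def brkL : A →ₗ[R] Module.End R (Module.End R A) where
  toFun a :=
    LinearMap.mulLeft R (LinearMap.mulLeft R a) - LinearMap.mulRight R (LinearMap.mulLeft R a)
  map_add' a b := by
    ext D x
    simp only [LinearMap.sub_apply, LinearMap.add_apply, LinearMap.mulLeft_apply,
      LinearMap.mulRight_apply, Module.End.mul_apply, map_add, add_mul]
    abel
  map_smul' r a := by
    ext D x
    simp only [LinearMap.sub_apply, LinearMap.smul_apply, LinearMap.mulLeft_apply,
      LinearMap.mulRight_apply, Module.End.mul_apply, map_smul, smul_mul_assoc, smul_sub,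
      RingHom.id_apply]

theorem brk_apply (a : A) (D : Module.End R A) (x : A) : Brk a D x = a * D x - D (a * x) := rfl

theorem brkL_apply (a : A) (D : Module.End R A) : brkL a D = Brk a D := rfl

theorem brk_restrictScalars {S : Type*} [CommSemiring S] [Algebra R S] [Algebra S A]
    [IsScalarTower R S A] (a : A) (D : Module.End S A) :
    Brk a (D.restrictScalars R) = (Brk a D).restrictScalars R := rfl

theorem commute_brkL (a b : A) : Commute (brkL (R := R) a) (brkL b) := by
  ext D x
  simp only [Module.End.mul_apply, brkL_apply, Brk, LinearMap.sub_apply, LinearMap.comp_apply,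
    LinearMap.mulLeft_apply, map_sub]
  rw [mul_left_comm b a x]
  ring

theorem brkL_pow_expChar_pow (p : ℕ) [ExpChar A p] (a : A) (m : ℕ) :
    brkL (R := R) a ^ p ^ m = brkL (a ^ p ^ m) := by
  have : ExpChar (Module.End R (Module.End R A)) p :=
    expChar_of_injective_ringHom (f := (Algebra.lmul R (Module.End R A)).toRingHom.comp
      (Algebra.lmul R A).toRingHom) (fun a b h => by
        simpa using LinearMap.congr_fun (LinearMap.congr_fun h 1) 1) p
  have := sub_pow_expChar_pow_of_commute (R := Module.End R (Module.End R A)) p m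
    (LinearMap.commute_mulLeft_right (R := R) (LinearMap.mulLeft R a) (LinearMap.mulLeft R a))
  rw [LinearMap.pow_mulLeft, LinearMap.pow_mulRight, LinearMap.pow_mulLeft] at this
  exact this

theorem brkL_algebraMap (r : R) : brkL (R := R) (algebraMap R A r) = 0 := by
  ext D x
  simp [brkL_apply, Brk, ← Algebra.smul_def]

theorem OrdLE.pow_brkL_apply {n : ℕ} {D : Module.End R A} (h : OrdLE n D) (a : A) :
    (brkL a ^ (n + 1)) D = 0 := by
  induction n generalizing D with
  | zero => exact h a
  | succ n ih => rw [pow_succ, Module.End.mul_apply]; exact ih (h a)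

theorem ordLE_of_forall_list_prod {n : ℕ} {D : Module.End R A}
    (h : ∀ l : List A, l.length = n + 1 → (l.map brkL).prod D = 0) : OrdLE n D := by
  induction n generalizing D with
  | zero =>
    intro a
    have := h [a] rfl
    simp only [List.map_cons, List.map_nil, List.prod_singleton] at this
    exact this
  | succ n ih =>
    refine fun a => ih fun l hl => ?_
    have := h (l ++ [a]) (by simp [hl])
    simp only [List.map_append, List.map_cons, List.map_nil, List.prod_append,
      List.prod_singleton, Module.End.mul_apply] at this
    exact this

theorem OrdLE.brk_pow_eq_zero (p : ℕ) [ExpChar A p] {n m : ℕ} {D : Module.End R A}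
    (h : OrdLE n D) (hn : n < p ^ m) (a : A) : Brk (a ^ p ^ m) D = 0 := by
  rw [← brkL_apply, ← brkL_pow_expChar_pow, ← Nat.sub_add_cancel hn, pow_add,
    Module.End.mul_apply, h.pow_brkL_apply, map_zero]

theorem OrdLE.restrictScalars {S : Type*} [CommSemiring S] [Algebra R S] [Algebra S A]
    [IsScalarTower R S A] {n : ℕ} {D : Module.End S A} (h : OrdLE n D) :
    OrdLE n (D.restrictScalars R) := by
  induction n generalizing D with
  | zero => intro a; rw [brk_restrictScalars, h a]; rfl
  | succ n ih => exact fun a => ih (h a)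

end Brk

theorem Ideal.list_prod_mem_pow {R : Type*} [CommSemiring R] {I : Ideal R} {l : List R}
    (h : ∀ x ∈ l, x ∈ I) : l.prod ∈ I ^ l.length := by
  induction l with
  | nil => simp
  | cons x l ih =>
    rw [List.prod_cons, List.length_cons, pow_succ']
    exact Ideal.mul_mem_mul (h x List.mem_cons_self)
      (ih fun y hy => h y (List.mem_cons_of_mem x hy))

open scoped IsMulCommutative in
theorem exists_forall_list_prod_brkL_eq_zero {R A : Type*} [CommRing R] [CommRing A]
    [Algebra R A] [Module.Finite R A] (p m : ℕ) [ExpChar A p]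
    (hpow : ∀ a : A, a ^ p ^ m ∈ Set.range (algebraMap R A)) :
    ∃ n : ℕ, ∀ l : List A, n ≤ l.length → (l.map (brkL (R := R))).prod = 0 := by
  classical
  let C := Algebra.adjoin R (Set.range (brkL (R := R) (A := A)))
  have : IsMulCommutative C := Algebra.isMulCommutative_adjoin R <| by
    rintro _ ⟨a, rfl⟩ _ ⟨b, rfl⟩
    exact commute_brkL a b
  let ι : A → C := fun a => ⟨brkL a, Algebra.subset_adjoin ⟨a, rfl⟩⟩
  obtain ⟨s, hs⟩ := Module.Finite.fg_top (R := R) (M := A)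
  let I : Ideal C := Ideal.span (ι '' s)
  have hι_mem : ∀ a, ι a ∈ I := by
    intro a
    have ha : a ∈ Submodule.span R (s : Set A) := hs ▸ Submodule.mem_top
    induction ha using Submodule.span_induction with
    | mem x hx => exact Ideal.subset_span ⟨x, hx, rfl⟩
    | zero =>
      have : ι 0 = 0 := Subtype.ext (map_zero _)
      exact this ▸ I.zero_mem
    | add x y _ _ hx hy =>
      have : ι (x + y) = ι x + ι y := Subtype.ext (map_add _ _ _)
      exact this ▸ I.add_mem hx hy
    | smul r x _ hx =>
      have : ι (r • x) = r • ι x := Subtype.ext (map_smul _ _ _)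
      exact this ▸ I.smul_of_tower_mem r hx
  have hI_nilpotent : IsNilpotent I := by
    refine (Ideal.FG.isNilpotent_iff_le_nilradical ⟨s.image ι, by simp [I]⟩).2 <|
      Ideal.span_le.2 ?_
    rintro _ ⟨a, -, rfl⟩
    obtain ⟨r, hr⟩ := hpow a
    refine ⟨p ^ m, Subtype.ext ?_⟩
    simp [ι, brkL_pow_expChar_pow, ← hr, brkL_algebraMap]
  obtain ⟨n, hn⟩ := hI_nilpotent
  refine ⟨n, fun l hl => ?_⟩
  have hprod : (l.map ι).prod ∈ I ^ n :=
    Ideal.pow_le_pow_right (by simpa using hl) (Ideal.list_prod_mem_pow fun _ hx => by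
      obtain ⟨a, -, rfl⟩ := List.mem_map.1 hx
      exact hι_mem a)
  rw [hn, Ideal.zero_eq_bot, Ideal.mem_bot] at hprod
  simpa [List.map_map, Function.comp_def, ι] using congrArg Subtype.val hprod

theorem isDiffOp_of_pow_mem_range {R A : Type*} [CommRing R] [CommRing A]
    [Algebra R A] [Module.Finite R A] (p m : ℕ) [ExpChar A p]
    (hpow : ∀ a : A, a ^ p ^ m ∈ Set.range (algebraMap R A)) (D : Module.End R A) :
    IsDiffOp R A D := by
  obtain ⟨n, hn⟩ := exists_forall_list_prod_brkL_eq_zero p m hpow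
  exact ⟨n, ordLE_of_forall_list_prod fun l hl => by rw [hn l (by omega), LinearMap.zero_apply]⟩

theorem smul_one_mem_centralizer_mulLeft {R A : Type*} [CommSemiring R] [CommRing A]
    [Algebra R A] (S : Set A) (a : A) :
    a • (1 : Module.End R A) ∈ Subring.centralizer (LinearMap.mulLeft R '' S) := by
  rintro _ ⟨w, -, rfl⟩
  ext x
  simp [mul_left_comm]

theorem mem_centralizer_mulLeft_iff {R A : Type*} [CommSemiring R] [CommRing A] [Algebra R A]
    {S : Set A} {D : Module.End R A} :
    D ∈ Subring.centralizer (LinearMap.mulLeft R '' S) ↔ ∀ w ∈ S, Brk w D = 0 := by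
  simp only [Subring.mem_centralizer_iff, Set.forall_mem_image]
  exact forall₂_congr fun w _ => sub_eq_zero.symm

theorem IsDiffOp.restrictScalars {R S A : Type*} [CommSemiring R] [CommSemiring S] [CommRing A]
    [Algebra R S] [Algebra R A] [Algebra S A] [IsScalarTower R S A] {D : Module.End S A}
    (h : IsDiffOp S A D) : IsDiffOp R A (D.restrictScalars R) :=
  let ⟨n, hn⟩ := h
  ⟨n, hn.restrictScalars⟩

theorem exists_end_apply_one_eq_zero_ne_zero {F K : Type*} [Field F] [Field K] [Algebra F K]
    {c : K} (hc : c ∉ Set.range (algebraMap F K)) :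
    ∃ D : Module.End F K, D 1 = 0 ∧ D c ≠ 0 := by
  have hc' : c ∉ Submodule.span F {(1 : K)} := fun hspan => by
    obtain ⟨r, rfl⟩ := Submodule.mem_span_singleton.1 hspan
    exact hc ⟨r, Algebra.algebraMap_eq_smul_one r⟩
  obtain ⟨f, hfc, hf1⟩ := Submodule.exists_dual_map_eq_bot_of_notMem hc' inferInstance
  refine ⟨Algebra.linearMap F K ∘ₗ f, ?_, ?_⟩
  · have : f 1 ∈ (Submodule.span F {(1 : K)}).map f :=
      Submodule.mem_map_of_mem (Submodule.mem_span_singleton_self 1)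
    rw [hf1, Submodule.mem_bot] at this
    simp [this]
  · simpa using hfc

theorem IntermediateField.finiteDimensional_of_adjoin_finset_eq_top {k K : Type*} [Field k]
    [Field K] [Algebra k K] {s : Finset K} (hs : IntermediateField.adjoin k (s : Set K) = ⊤)
    (F : IntermediateField k K) [Algebra.IsIntegral F K] : FiniteDimensional F K := by
  have htop : IntermediateField.adjoin F (s : Set K) = ⊤ := by
    rw [← IntermediateField.restrictScalars_eq_top_iff (K := k), eq_top_iff, ← hs,
      IntermediateField.restrictScalars_adjoin]
    exact IntermediateField.adjoin.mono k _ _ Set.subset_union_right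
  have := IntermediateField.finiteDimensional_adjoin (K := F) (S := (s : Set K))
    fun x _ => Algebra.IsIntegral.isIntegral x
  rw [htop] at this
  exact IntermediateField.topEquiv.toLinearEquiv.finiteDimensional

section PowerSubfields

variable {K : Type*} [Field K] (p : ℕ) [hp : Fact p.Prime] [CharP K p]

theorem mem_pfield_iff {n : ℕ} {x : K} : x ∈ pfield K p n ↔ ∃ y : K, y ^ p ^ n = x := by
  simp [pfield, iterateFrobenius_def]

theorem pow_mem_pfield (a : K) (n : ℕ) : a ^ p ^ n ∈ pfield K p n :=
  (mem_pfield_iff p).2 ⟨a, rfl⟩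

theorem pfield_antitone : Antitone (pfield K p) := by
  intro m n hmn x hx
  obtain ⟨y, rfl⟩ := (mem_pfield_iff p).1 hx
  rw [← Nat.sub_add_cancel hmn, pow_add, pow_mul]
  exact pow_mem_pfield p _ m

theorem kfield_le_pfield (n : ℕ) : kfield K p ≤ pfield K p n := iInf_le _ n

theorem pfield_succ_lt (hne : kfield K p ≠ ⊤) (n : ℕ) :
    pfield K p (n + 1) < pfield K p n := by
  refine lt_of_le_of_ne (pfield_antitone p n.le_succ) fun heq => hne ?_
  have : PerfectRing K p := PerfectRing.ofSurjective K p fun x => by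
    obtain ⟨y, hy⟩ := (mem_pfield_iff p).1 (heq ▸ pow_mem_pfield p x n)
    refine ⟨y, (iterateFrobenius K p n).injective ?_⟩
    simp only [iterateFrobenius_def, frobenius_def, ← pow_mul, ← pow_succ', hy]
  refine eq_top_iff.2 fun x _ => Subfield.mem_iInf.2 fun m => ?_
  obtain ⟨y, rfl⟩ := (bijective_iterateFrobenius K p m).2 x
  exact pow_mem_pfield p y m

theorem IsDiffOp.eventually_mem_centralizer_pfield {R : Type*} [CommSemiring R] [Algebra R K]
    {D : Module.End R K} (hD : IsDiffOp R K D) :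
    ∀ᶠ m in Filter.atTop,
      D ∈ Subring.centralizer (LinearMap.mulLeft R '' (pfield K p m : Set K)) := by
  obtain ⟨n, hn⟩ := hD
  refine Filter.eventually_atTop.2
    ⟨n, fun m hm => mem_centralizer_mulLeft_iff.2 fun w hw => ?_⟩
  obtain ⟨y, rfl⟩ := (mem_pfield_iff p).1 hw
  exact hn.brk_pow_eq_zero p ((Nat.lt_pow_self hp.out.one_lt).trans_le
    (Nat.pow_le_pow_right hp.out.pos hm)) y

variable (K) in
noncomputable def pfieldOver (n : ℕ) : IntermediateField (kfield K p) K :=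
  (pfield K p n).toIntermediateField fun x => kfield_le_pfield p n x.2

instance (n : ℕ) : IsPurelyInseparable (pfieldOver K p n) K :=
  (isPurelyInseparable_iff_pow_mem _ p).2 fun x => ⟨n, ⟨⟨_, pow_mem_pfield p x n⟩, rfl⟩⟩

end PowerSubfields

/-- if `K ≠ k` (`k = ⋂ K^{p^n}`, `K/k` finitely generated), the `K`-algebra
`Diff_k(K)` of differential operators is not finitely generated as a `K`-algebra: there is
no finite set `s` such that the subring of `End_k(K)` generated by the multiplication
operators `a • id` (`a ∈ K`) together with `s` is exactly the set of differential
operators. -/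
theorem stmt7 {K : Type*} [Field K] (p : ℕ) [Fact p.Prime] [CharP K p]
    (hfg : ∃ s : Finset K, IntermediateField.adjoin ↥(kfield K p) (s : Set K) = ⊤)
    (hne : kfield K p ≠ ⊤) :
    ¬ ∃ s : Finset (Module.End ↥(kfield K p) K),
        {D : Module.End ↥(kfield K p) K | IsDiffOp ↥(kfield K p) K D} =
          (Subring.closure
            ((Set.range fun a : K => a • (1 : Module.End ↥(kfield K p) K)) ∪ ↑s) :
              Set (Module.End ↥(kfield K p) K)) := by
  rintro ⟨t, ht⟩
  set G := Subring.closure ((Set.range fun a : K => a • (1 : Module.End (kfield K p) K)) ∪ ↑t)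
  have hG : ∀ D, IsDiffOp (kfield K p) K D ↔ D ∈ G := fun D => Set.ext_iff.1 ht D
  let Z : ℕ → Subring (Module.End (kfield K p) K) := fun m =>
    Subring.centralizer (LinearMap.mulLeft _ '' (pfield K p m : Set K))
  obtain ⟨N, hN⟩ : ∃ N, ∀ D ∈ t, D ∈ Z N :=
    ((Filter.eventually_all_finset t).2 fun D hD =>
      IsDiffOp.eventually_mem_centralizer_pfield p
        ((hG D).2 (Subring.subset_closure (Or.inr hD)))).exists
  have hclosure : G ≤ Z N := Subring.closure_le.2 <|
    Set.union_subset (Set.range_subset_iff.2 (smul_one_mem_centralizer_mulLeft _)) hN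
  obtain ⟨c, hc, hc'⟩ := SetLike.exists_of_lt (pfield_succ_lt p hne N)
  obtain ⟨s, hs⟩ := hfg
  have := IntermediateField.finiteDimensional_of_adjoin_finset_eq_top hs (pfieldOver K p (N + 1))
  obtain ⟨D, hD1, hDc⟩ := exists_end_apply_one_eq_zero_ne_zero (F := pfieldOver K p (N + 1))
    (c := c) fun ⟨r, hr⟩ => hc' (hr ▸ r.2)
  have hD : IsDiffOp _ K (D.restrictScalars (kfield K p)) :=
    (isDiffOp_of_pow_mem_range p (N + 1)
      (fun a => ⟨⟨_, pow_mem_pfield p a (N + 1)⟩, rfl⟩) D).restrictScalars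
  have hD_mul : D c = c * D 1 := by
    have := LinearMap.congr_fun (mem_centralizer_mulLeft_iff.1 (hclosure ((hG _).1 hD)) c hc) 1
    rw [brk_apply, LinearMap.zero_apply, mul_one, sub_eq_zero] at this
    exact this.symm
  exact hDc (by rw [hD_mul, hD1, mul_zero])
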